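/- Let Γ be a finite simplicial graph, A(Γ) its right-angled Artin group, and v a vertex of Γ with dual class f_v ∈ H^1(A(Γ); Q). Then the linear map H^1(A(Γ); Q) → H^2(A(Γ); Q) given by cup product with f_v has rank equal to the degree of the vertex v in Γ. -/

import Mathlib

open scoped commutatorElement

/-- The defining relations of the right-angled Artin group on a graph `Γ`:
commutators of generators spanning an edge. -/
def raagRels {V : Type*} (Γ : SimpleGraph V) : Set (FreeGroup V) :=
  {r | ∃ v w : V, Γ.Adj v w ∧ r = ⁅FreeGroup.of v, FreeGroup.of w⁆}

/-- The right-angled Artin group `A(Γ)` of a graph `Γ`. -/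
def RAAG {V : Type*} (Γ : SimpleGraph V) : Type _ := PresentedGroup (raagRels Γ)

instance {V : Type*} (Γ : SimpleGraph V) : Group (RAAG Γ) :=
  QuotientGroup.Quotient.group _

/-- The generator of `A(Γ)` corresponding to a vertex. -/
def RAAG.gen {V : Type*} (Γ : SimpleGraph V) (v : V) : RAAG Γ :=
  PresentedGroup.of (rels := raagRels Γ) v

/-- The defining relations of the right-angled Coxeter group on a graph `Γ`:
edge commutators together with the squares of all generators. -/
def racgRels {V : Type*} (Γ : SimpleGraph V) : Set (FreeGroup V) :=
  raagRels Γ ∪ {r | ∃ v : V, r = (FreeGroup.of v) ^ 2}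

/-- The right-angled Coxeter group `C(Γ)` of a graph `Γ`. -/
def RACG {V : Type*} (Γ : SimpleGraph V) : Type _ := PresentedGroup (racgRels Γ)

instance {V : Type*} (Γ : SimpleGraph V) : Group (RACG Γ) :=
  QuotientGroup.Quotient.group _

/-- The generator of `C(Γ)` corresponding to a vertex. -/
def RACG.gen {V : Type*} (Γ : SimpleGraph V) (v : V) : RACG Γ :=
  PresentedGroup.of (rels := racgRels Γ) v
section GroupCohomologyLowDim

variable (k : Type*) [CommRing k] (G : Type*) [Group G]

/-- `H¹(G; k)` with trivial coefficients: additive homomorphisms `G → k`,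
as a `k`-module. -/
def H1 : Submodule k (G → k) where
  carrier := {f | ∀ x y : G, f (x * y) = f x + f y}
  add_mem' := by
    intro f g hf hg x y
    simp only [Pi.add_apply, hf x y, hg x y]; ring
  zero_mem' := by intro x y; simp
  smul_mem' := by
    intro a f hf x y
    simp only [Pi.smul_apply, smul_eq_mul, hf x y]; ring

variable {k G} in
/-- The (inhomogeneous) 2-cocycle condition for trivial coefficients. -/
def IsTwoCocycle (c : G → G → k) : Prop :=
  ∀ x y z : G, c y z - c (x * y) z + c x (y * z) - c x y = 0

variable {k G} in
/-- The (inhomogeneous) 2-coboundary condition for trivial coefficients. -/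
def IsTwoCoboundary (c : G → G → k) : Prop :=
  ∃ f : G → k, ∀ x y : G, c x y = f x - f (x * y) + f y

/-- The `k`-module of 2-cocycles on `G` with trivial coefficients. -/
def twoCocycles : Submodule k (G → G → k) where
  carrier := {c | IsTwoCocycle c}
  add_mem' := by
    intro c d hc hd x y z
    have h1 := hc x y z
    have h2 := hd x y z
    simp only [Pi.add_apply]
    linear_combination h1 + h2
  zero_mem' := by intro x y z; simp
  smul_mem' := by
    intro a c hc x y z
    have h1 := hc x y z
    simp only [Pi.smul_apply, smul_eq_mul]
    linear_combination a * h1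

/-- The 2-coboundaries, as a submodule of the 2-cocycles. -/
def twoCoboundariesIn : Submodule k (twoCocycles k G) where
  carrier := {c | IsTwoCoboundary (c : G → G → k)}
  add_mem' := by
    rintro c d ⟨f, hf⟩ ⟨g, hg⟩
    exact ⟨f + g, fun x y => by
      simp only [Submodule.coe_add, Pi.add_apply, hf x y, hg x y]; ring⟩
  zero_mem' := ⟨0, fun x y => by simp⟩
  smul_mem' := by
    rintro a c ⟨f, hf⟩
    exact ⟨a • f, fun x y => by
      simp only [SetLike.val_smul, Pi.smul_apply, smul_eq_mul, hf x y]; ring⟩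

/-- `H²(G; k)` with trivial coefficients: 2-cocycles modulo 2-coboundaries. -/
def H2 : Type _ := twoCocycles k G ⧸ twoCoboundariesIn k G

noncomputable instance : AddCommGroup (H2 k G) := by
  unfold H2; infer_instance

noncomputable instance : Module k (H2 k G) := by
  unfold H2; infer_instance

variable {k G} in
/-- The 2-cocycle `(x, y) ↦ f x * g y` given by two 1-cocycles. -/
def cupCocycle (f g : H1 k G) : twoCocycles k G :=
  ⟨fun x y => f.1 x * g.1 y, by
    intro x y z
    have hf := f.2 x y
    have hg := g.2 y z
    simp only [Set.mem_setOf_eq] at hf hg ⊢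
    linear_combination (f.1 x : k) * hg - (g.1 z : k) * hf⟩

/-- The cup product `H¹(G;k) × H¹(G;k) → H²(G;k)` as a `k`-bilinear map. -/
noncomputable def cup : H1 k G →ₗ[k] H1 k G →ₗ[k] H2 k G :=
  LinearMap.mk₂ k (fun f g => Submodule.Quotient.mk (cupCocycle f g))
    (by
      intro f f' g
      have h : cupCocycle (f + f') g = cupCocycle f g + cupCocycle f' g := by
        apply Subtype.ext; funext x y; simp [cupCocycle]; ring
      show Submodule.Quotient.mk (cupCocycle (f + f') g) = _
      rw [h, Submodule.Quotient.mk_add]; rfl)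
    (by
      intro a f g
      have h : cupCocycle (a • f) g = a • cupCocycle f g := by
        apply Subtype.ext; funext x y; simp [cupCocycle]; ring
      show Submodule.Quotient.mk (cupCocycle (a • f) g) = _
      rw [h, Submodule.Quotient.mk_smul]; rfl)
    (by
      intro f g g'
      have h : cupCocycle f (g + g') = cupCocycle f g + cupCocycle f g' := by
        apply Subtype.ext; funext x y; simp [cupCocycle]; ring
      show Submodule.Quotient.mk (cupCocycle f (g + g')) = _
      rw [h, Submodule.Quotient.mk_add]; rfl)
    (by
      intro a f g
      have h : cupCocycle f (a • g) = a • cupCocycle f g := by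
        apply Subtype.ext; funext x y; simp [cupCocycle]; ring
      show Submodule.Quotient.mk (cupCocycle f (a • g)) = _
      rw [h, Submodule.Quotient.mk_smul]; rfl)

variable {k G}

variable {G' : Type*} [Group G']

/-- The map on `H¹` induced by a group homomorphism. -/
def H1map (φ : G →* G') : H1 k G' →ₗ[k] H1 k G where
  toFun f := ⟨f.1 ∘ φ, by intro x y; simp only [Function.comp_apply, map_mul]; exact f.2 _ _⟩
  map_add' f g := rfl
  map_smul' a f := rfl

/-- The pull-back of 2-cocycles along a group homomorphism. -/
def twoCocyclesMap (φ : G →* G') : twoCocycles k G' →ₗ[k] twoCocycles k G where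
  toFun c := ⟨fun x y => c.1 (φ x) (φ y), by
    intro x y z
    have := c.2 (φ x) (φ y) (φ z)
    simp only [map_mul] at *
    exact this⟩
  map_add' c d := rfl
  map_smul' a c := rfl

/-- The map on `H²` induced by a group homomorphism. -/
noncomputable def H2map (φ : G →* G') : H2 k G' →ₗ[k] H2 k G :=
  Submodule.mapQ (twoCoboundariesIn k G') (twoCoboundariesIn k G) (twoCocyclesMap φ)
    (by
      rintro c ⟨f, hf⟩
      exact ⟨f ∘ φ, fun x y => by
        simp only [Function.comp_apply, map_mul, twoCocyclesMap, LinearMap.coe_mk,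
          AddHom.coe_mk]
        exact hf _ _⟩)

end GroupCohomologyLowDim
section DualClassesAndProjection

variable {V : Type*} [DecidableEq V] (Γ : SimpleGraph V) (k : Type*) [CommRing k]

/-- The homomorphism `A(Γ) → k` (written multiplicatively) dual to a vertex `v`,
sending `v ↦ 1` and all other generators to `0`. -/
def RAAG.dualHom (v : V) : RAAG Γ →* Multiplicative k :=
  PresentedGroup.toGroup
    (f := fun w => Multiplicative.ofAdd (if w = v then (1 : k) else 0))
    (by
      rintro r ⟨a, b, hab, rfl⟩
      rw [map_commutatorElement]
      exact commutatorElement_eq_one_iff_commute.mpr (mul_comm _ _))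

/-- The cohomology class `f_v ∈ H¹(A(Γ); k)` dual to the vertex `v`. -/
def RAAG.dual (v : V) : H1 k (RAAG Γ) :=
  ⟨fun g => Multiplicative.toAdd (RAAG.dualHom Γ k v g), by
    intro x y
    simp [map_mul]⟩

/-- The canonical surjection `A(Γ) → C(Γ)`. -/
def raagToRacg : RAAG Γ →* RACG Γ :=
  PresentedGroup.toGroup (f := fun v => RACG.gen Γ v) (by
    intro r hr
    have h : FreeGroup.lift (fun v => RACG.gen Γ v) = PresentedGroup.mk (racgRels Γ) := by
      apply FreeGroup.ext_hom
      intro a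
      simp only [FreeGroup.lift_apply_of]
      rfl
    rw [h]
    have hmem : r ∈ Subgroup.normalClosure (racgRels Γ) :=
      Subgroup.subset_normalClosure (Set.mem_union_left _ hr)
    exact (QuotientGroup.eq_one_iff r).mpr hmem)

end DualClassesAndProjection

/-!
Identify `H¹(A(Γ); k)` with `k^V` by evaluation on the generators. For commuting `a, b`, the
antisymmetrisation `c(a, b) - c(b, a)` of a 2-cocycle kills coboundaries, and on `f ⌣ g` it
equals `f(a) g(b) - f(b) g(a)`. Conversely, if this vanishes on every edge of `Γ`, the pair
`(f, g)` lifts to a homomorphism into the Heisenberg group, whose third coordinate is a cochain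
bounding `f ⌣ g`. Hence `f_v ⌣ g = 0` exactly when `g` vanishes on the neighbours of `v`, and the
rank of `g ↦ f_v ⌣ g` is that of restriction to the neighbours, namely `deg v`.
-/

lemma LinearMap.finrank_range_eq_of_ker_eq {R M N P : Type*} [Ring R] [AddCommGroup M]
    [Module R M] [AddCommGroup N] [Module R N] [AddCommGroup P] [Module R P]
    {f : M →ₗ[R] N} {g : M →ₗ[R] P} (h : LinearMap.ker f = LinearMap.ker g) :
    Module.finrank R (LinearMap.range f) = Module.finrank R (LinearMap.range g) :=
  ((f.quotKerEquivRange.symm.trans (Submodule.quotEquivOfEq _ _ h)).trans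
    g.quotKerEquivRange).finrank_eq

section LowDegreeCohomology

variable {k : Type*} [CommRing k] {G : Type*} [Group G]

lemma H1.map_one (f : H1 k G) : f.1 1 = 0 := by
  simpa using f.2 1 1

lemma H1.map_inv (f : H1 k G) (x : G) : f.1 x⁻¹ = -f.1 x := by
  have h := f.2 x x⁻¹
  rw [mul_inv_cancel, H1.map_one] at h
  linear_combination -h

lemma H1.ext_of_closure_eq_top {f g : H1 k G} {s : Set G} (hs : Subgroup.closure s = ⊤)
    (h : ∀ x ∈ s, f.1 x = g.1 x) : f = g := by
  refine Subtype.ext (funext fun x => ?_)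
  induction (hs ▸ Subgroup.mem_top x : x ∈ Subgroup.closure s) using
    Subgroup.closure_induction with
  | mem y hy => exact h y hy
  | one => rw [H1.map_one, H1.map_one]
  | mul y z _ _ hy hz => rw [f.2, g.2, hy, hz]
  | inv y _ hy => rw [H1.map_inv, H1.map_inv, hy]

def H1.ofHom (φ : G →* Multiplicative k) : H1 k G :=
  ⟨fun g => (φ g).toAdd, fun x y => by simp⟩

@[simp]
lemma H1.ofHom_apply (φ : G →* Multiplicative k) (g : G) : (H1.ofHom φ).1 g = (φ g).toAdd :=
  rfl

/-- Pairing with the fundamental class of the torus spanned by commuting `a` and `b`. -/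
noncomputable def H2.evalCommutingPair {a b : G} (hab : Commute a b) : H2 k G →ₗ[k] k :=
  Submodule.liftQ _
    { toFun c := c.1 a b - c.1 b a
      map_add' c d := by simp only [Submodule.coe_add, Pi.add_apply]; ring
      map_smul' r c := by
        simp only [SetLike.val_smul, Pi.smul_apply, smul_eq_mul, RingHom.id_apply]; ring }
    (by
      rintro c ⟨f, hf⟩
      simp only [LinearMap.mem_ker, LinearMap.coe_mk, AddHom.coe_mk, hf, hab.eq]
      ring)

lemma H2.evalCommutingPair_cup {a b : G} (hab : Commute a b) (f g : H1 k G) :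
    H2.evalCommutingPair hab (cup k G f g) = f.1 a * g.1 b - f.1 b * g.1 a := by
  change Submodule.liftQ _ _ _ (Submodule.Quotient.mk (cupCocycle f g)) = _
  rfl

/-- Upper unitriangular matrices `[[1, x, z], [0, 1, y], [0, 0, 1]]` over `k`. -/
@[ext]
structure Heisenberg (k : Type*) where
  x : k
  y : k
  z : k

namespace Heisenberg

instance : Mul (Heisenberg k) := ⟨fun p q => ⟨p.x + q.x, p.y + q.y, p.z + q.z + p.x * q.y⟩⟩
instance : One (Heisenberg k) := ⟨⟨0, 0, 0⟩⟩
instance : Inv (Heisenberg k) := ⟨fun p => ⟨-p.x, -p.y, -p.z + p.x * p.y⟩⟩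

@[simp] lemma mul_x (p q : Heisenberg k) : (p * q).x = p.x + q.x := rfl
@[simp] lemma mul_y (p q : Heisenberg k) : (p * q).y = p.y + q.y := rfl
@[simp] lemma mul_z (p q : Heisenberg k) : (p * q).z = p.z + q.z + p.x * q.y := rfl
@[simp] lemma one_x : (1 : Heisenberg k).x = 0 := rfl
@[simp] lemma one_y : (1 : Heisenberg k).y = 0 := rfl
@[simp] lemma one_z : (1 : Heisenberg k).z = 0 := rfl
@[simp] lemma inv_x (p : Heisenberg k) : p⁻¹.x = -p.x := rfl
@[simp] lemma inv_y (p : Heisenberg k) : p⁻¹.y = -p.y := rfl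
@[simp] lemma inv_z (p : Heisenberg k) : p⁻¹.z = -p.z + p.x * p.y := rfl

instance : Group (Heisenberg k) where
  mul_assoc p q r := by ext <;> simp <;> ring
  one_mul p := by ext <;> simp
  mul_one p := by ext <;> simp
  inv_mul_cancel p := by ext <;> simp

def fst : Heisenberg k →* Multiplicative k where
  toFun p := .ofAdd p.x
  map_one' := rfl
  map_mul' _ _ := rfl

def snd : Heisenberg k →* Multiplicative k where
  toFun p := .ofAdd p.y
  map_one' := rfl
  map_mul' _ _ := rfl

end Heisenberg

lemma cup_ofHom_fst_ofHom_snd (ψ : G →* Heisenberg k) :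
    cup k G (H1.ofHom (Heisenberg.fst.comp ψ)) (H1.ofHom (Heisenberg.snd.comp ψ)) = 0 := by
  refine (Submodule.Quotient.mk_eq_zero _).mpr ⟨fun g => -(ψ g).z, fun a b => ?_⟩
  change (ψ a).x * (ψ b).y = -(ψ a).z - -(ψ (a * b)).z + -(ψ b).z
  rw [map_mul, Heisenberg.mul_z]
  ring

end LowDegreeCohomology

namespace RAAG

variable {V : Type*} (Γ : SimpleGraph V)

lemma gen_commute {a b : V} (h : Γ.Adj a b) : Commute (gen Γ a) (gen Γ b) := by
  rw [← commutatorElement_eq_one_iff_commute]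
  exact PresentedGroup.one_of_mem ⟨a, b, h, rfl⟩

lemma closure_range_gen : Subgroup.closure (Set.range (gen Γ)) = ⊤ :=
  PresentedGroup.closure_range_of _

def lift {H : Type*} [Group H] (f : V → H) (hf : ∀ a b, Γ.Adj a b → Commute (f a) (f b)) :
    RAAG Γ →* H :=
  PresentedGroup.toGroup (by
    rintro _ ⟨a, b, hab, rfl⟩
    rw [map_commutatorElement, FreeGroup.lift_apply_of, FreeGroup.lift_apply_of]
    exact commutatorElement_eq_one_iff_commute.mpr (hf a b hab))

@[simp]
lemma lift_gen {H : Type*} [Group H] (f : V → H) (hf : ∀ a b, Γ.Adj a b → Commute (f a) (f b))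
    (w : V) : lift Γ f hf (gen Γ w) = f w :=
  PresentedGroup.toGroup.of _

variable {k : Type*} [CommRing k]

lemma H1_ext {f g : H1 k (RAAG Γ)} (h : ∀ w, f.1 (gen Γ w) = g.1 (gen Γ w)) : f = g :=
  H1.ext_of_closure_eq_top (closure_range_gen Γ) (by rintro _ ⟨w, rfl⟩; exact h w)

def ofFun (b : V → k) : H1 k (RAAG Γ) :=
  H1.ofHom (lift Γ (fun w => .ofAdd (b w)) fun _ _ _ => Commute.all _ _)

@[simp]
lemma ofFun_gen (b : V → k) (w : V) : (ofFun Γ b).1 (gen Γ w) = b w := by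
  simp [ofFun]

lemma dual_eq_ofFun [DecidableEq V] (v : V) :
    dual Γ k v = ofFun Γ (fun w => if w = v then 1 else 0) :=
  rfl

lemma cup_eq_zero_iff (f g : H1 k (RAAG Γ)) :
    cup k (RAAG Γ) f g = 0 ↔
      ∀ a b, Γ.Adj a b → f.1 (gen Γ a) * g.1 (gen Γ b) = f.1 (gen Γ b) * g.1 (gen Γ a) := by
  constructor
  · intro h a b hab
    rw [← sub_eq_zero, ← H2.evalCommutingPair_cup (gen_commute Γ hab), h, map_zero]
  · intro h
    let ψ := lift Γ (fun w => (⟨f.1 (gen Γ w), g.1 (gen Γ w), 0⟩ : Heisenberg k)) fun a b hab => by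
      ext <;> simp [add_comm, h a b hab]
    have hψ (w : V) : ψ (gen Γ w) = ⟨f.1 (gen Γ w), g.1 (gen Γ w), 0⟩ := lift_gen Γ _ _ w
    have hf : f = H1.ofHom (Heisenberg.fst.comp ψ) :=
      H1_ext Γ fun w => (congrArg Heisenberg.x (hψ w)).symm
    have hg : g = H1.ofHom (Heisenberg.snd.comp ψ) :=
      H1_ext Γ fun w => (congrArg Heisenberg.y (hψ w)).symm
    rw [hf, hg]
    exact cup_ofHom_fst_ofHom_snd ψ

def restrictGens (s : Set V) : H1 k (RAAG Γ) →ₗ[k] (s → k) where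
  toFun f w := f.1 (gen Γ w)
  map_add' _ _ := rfl
  map_smul' _ _ := rfl

lemma restrictGens_surjective (s : Set V) :
    Function.Surjective (restrictGens Γ (k := k) s) := by
  classical
  intro b
  refine ⟨ofFun Γ fun w => if hw : w ∈ s then b ⟨w, hw⟩ else 0, funext fun w => ?_⟩
  simp [restrictGens]

lemma ker_cup_dual [DecidableEq V] (v : V) :
    LinearMap.ker (cup k (RAAG Γ) (dual Γ k v)) =
      LinearMap.ker (restrictGens Γ (Γ.neighborSet v)) := by
  ext g
  simp only [LinearMap.mem_ker, cup_eq_zero_iff, dual_eq_ofFun, ofFun_gen, funext_iff,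
    restrictGens, LinearMap.coe_mk, AddHom.coe_mk, Pi.zero_apply, Subtype.forall,
    SimpleGraph.mem_neighborSet]
  constructor
  · intro h w hw
    simpa [hw.ne'] using h v w hw
  · intro h a b hab
    by_cases ha : a = v
    · subst ha
      simp [h b hab, hab.ne']
    by_cases hb : b = v
    · subst hb
      simp [h a hab.symm, hab.ne]
    simp [ha, hb]

end RAAG

/-- For a vertex `v` of a finite graph `Γ`, the linear map
`H¹(A(Γ); ℚ) → H²(A(Γ); ℚ)` given by cup product with the dual class `f_v`
has rank equal to the degree of `v` in `Γ`. -/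
theorem rank_cup_dual_eq_degree {V : Type} [Fintype V] [DecidableEq V]
    (Γ : SimpleGraph V) [DecidableRel Γ.Adj] (v : V) :
    Module.finrank ℚ (LinearMap.range (cup ℚ (RAAG Γ) (RAAG.dual Γ ℚ v))) = Γ.degree v := by
  rw [LinearMap.finrank_range_eq_of_ker_eq (RAAG.ker_cup_dual Γ v),
    LinearMap.range_eq_top.mpr (RAAG.restrictGens_surjective Γ _), finrank_top,
    Module.finrank_fintype_fun_eq_card, SimpleGraph.card_neighborSet_eq_degree]
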